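/- arXiv:2602.12959 — 6 statements merged into one kernel-verified Lean document; each statement's English description precedes it below -/
import Mathlib

section
/- Let α ∈ (0,1], let F be a directed acyclic graph, and let F' be obtained from F by adding, for each vertex x, a set A_x of a_x := ⌊(1/α − 1)·|prey_F(x)|⌋ new in-neighbors of x (the new vertices having no other incident edges). If S ⊆ X is 1-viable in F, then S is α-viable in F'. -/
open Finset

/-- Let `F'` be obtained from a DAG `F` on vertex set `X` by adding, for each
vertex `x ∈ X`, a set of `⌊(1/α − 1)·|prey_F(x)|⌋` new in-neighbors with no
other incident edges (so in `F'`, `prey_{F'}(x) ∩ X = prey_F(x)` and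
`prey_{F'}(x) \ X` consists of the new dummies).  If `S ⊆ X` is 1-viable in
`F`, then `S` is α-viable in `F'`. -/
theorem stmt4 {V : Type*} [Fintype V] [DecidableEq V] (F' : V → V → Prop) [DecidableRel F']
    (hacyc : ∀ x, ¬ Relation.TransGen F' x x)
    (α : ℝ) (hα0 : 0 < α) (hα1 : α ≤ 1)
    (X : Finset V)
    (prey : V → Finset V)
    (hprey : ∀ x, prey x = Finset.univ.filter (fun y => F' y x))
    (hdummy : ∀ x ∈ X, ((prey x) \ X).card = ⌊(1 / α - 1) * (((prey x) ∩ X).card : ℝ)⌋₊)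
    (S : Finset V) (hSX : S ⊆ X)
    (hviab : ∀ x ∈ S, (prey x) ∩ X ⊆ S) :
    ∀ x ∈ S, α * ((prey x).card : ℝ) ≤ ((S ∩ prey x).card : ℝ) := by
  intro x hx
  have hxX : x ∈ X := hSX hx
  set k : ℕ := ((prey x) ∩ X).card with hk
  have hsplit : (prey x).card = k + ((prey x) \ X).card := by
    rw [hk, Finset.card_inter_add_card_sdiff]
  have hnonneg : (0:ℝ) ≤ (1 / α - 1) * (k : ℝ) := by
    apply mul_nonneg
    · have : (1:ℝ) ≤ 1 / α := by rw [le_div_iff₀ hα0]; linarith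
      linarith
    · positivity
  have hfloor : (((prey x) \ X).card : ℝ) ≤ (1 / α - 1) * (k : ℝ) := by
    rw [hdummy x hxX]
    exact Nat.floor_le hnonneg
  have hsub : (prey x) ∩ X ⊆ S ∩ prey x := by
    intro y hy
    exact Finset.mem_inter.2 ⟨hviab x hx hy, (Finset.mem_inter.1 hy).1⟩
  have hcard : (k : ℝ) ≤ ((S ∩ prey x).card : ℝ) := by
    exact_mod_cast Finset.card_le_card hsub
  have : α * ((prey x).card : ℝ) ≤ (k : ℝ) := by
    rw [hsplit]
    push_cast
    have h1 : α * ((k : ℝ) + (1 / α - 1) * (k : ℝ)) = (k : ℝ) := by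
      field_simp
      ring
    nlinarith [hfloor]
  linarith
end

section
/- Let α ∈ (0,1], let F be a directed acyclic graph on vertex set X, and let F' be obtained from F by adding for each x ∈ X a set A_x of a_x := ⌊(1/α − 1)·|prey_F(x)|⌋ new in-neighbors of x with no other incident edges. If S' is a set of vertices of F' that is α-viable in F' and S' contains no newly added vertex, then S' ∩ X is 1-viable in F. -/
open Finset

/-- The converse direction of the dummy-prey construction: if `F'` is obtained
from a DAG `F` on `X` by adding, for each `x ∈ X`, `⌊(1/α − 1)·|prey_F(x)|⌋`
new in-neighbors with no other incident edges, and `S'` is α-viable in `F'`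
and contains no newly added vertex (i.e. `S' ⊆ X`), then `S' = S' ∩ X` is
1-viable in `F` (i.e. `prey_F(x) = prey_{F'}(x) ∩ X ⊆ S'` for all `x ∈ S'`). -/
theorem stmt5 {V : Type*} [Fintype V] [DecidableEq V] (F' : V → V → Prop) [DecidableRel F']
    (hacyc : ∀ x, ¬ Relation.TransGen F' x x)
    (α : ℝ) (hα0 : 0 < α) (hα1 : α ≤ 1)
    (X : Finset V)
    (prey : V → Finset V)
    (hprey : ∀ x, prey x = Finset.univ.filter (fun y => F' y x))
    (hdummy : ∀ x ∈ X, ((prey x) \ X).card = ⌊(1 / α - 1) * (((prey x) ∩ X).card : ℝ)⌋₊)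
    (S' : Finset V) (hS'X : S' ⊆ X)
    (hviab : ∀ x ∈ S', α * ((prey x).card : ℝ) ≤ ((S' ∩ prey x).card : ℝ)) :
    ∀ x ∈ S', (prey x) ∩ X ⊆ S' := by
  intro x hx y hy
  have hP : S' ∩ prey x ⊆ prey x ∩ X := by
    intro z hz
    rw [mem_inter] at hz ⊢
    exact ⟨hz.2, hS'X hz.1⟩
  have hcard : (prey x).card = (prey x ∩ X).card + ((prey x) \ X).card :=
    (card_inter_add_card_sdiff (prey x) X).symm
  have hD := hdummy x (hS'X hx)
  have hv := hviab x hx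
  have hfloor : (1 / α - 1) * (((prey x ∩ X).card : ℝ)) - 1 < (((prey x) \ X).card : ℝ) := by
    rw [hD]
    exact_mod_cast Nat.sub_one_lt_floor _
  have hα : α * (1 / α) = 1 := by field_simp
  have hcardR : ((prey x).card : ℝ) = ((prey x ∩ X).card : ℝ) + (((prey x) \ X).card : ℝ) := by
    rw [hcard]; push_cast; ring
  have key : ((prey x ∩ X).card : ℝ) - 1 < ((S' ∩ prey x).card : ℝ) := by
    nlinarith [hv, hfloor, hcardR, hα]
  have hle : (prey x ∩ X).card ≤ (S' ∩ prey x).card := by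
    have h2 : ((prey x ∩ X).card : ℝ) < ((S' ∩ prey x).card : ℝ) + 1 := by linarith
    exact Nat.lt_add_one_iff.mp (by exact_mod_cast h2)
  have heq : S' ∩ prey x = prey x ∩ X := eq_of_subset_of_card_le hP hle
  have : y ∈ S' ∩ prey x := heq ▸ hy
  exact (mem_inter.mp this).1
end

section
/- Let G = (V,E) be an undirected graph and let S ⊆ V ∪ E be such that every e = {u,v} ∈ S ∩ E has both endpoints in S ∩ V. Suppose |S| ≤ C(k,2) + k and the weighted count 2·|S ∩ E| + |S ∩ V| ≥ 2·C(k,2) + k, where C(k,2) = k(k−1)/2. Then |S ∩ V| = k, |S ∩ E| = C(k,2), and S ∩ V is a clique of size k in G. -/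
/-- Counting argument for the clique reduction: if `A ⊆ V` and `B ⊆ E` are
such that every edge in `B` has both endpoints in `A`,
`|A| + |B| ≤ C(k,2) + k` and `2|B| + |A| ≥ 2·C(k,2) + k`, then `|A| = k`,
`|B| = C(k,2)` and `A` is a clique of size `k` in `G`. -/
theorem stmt11 {V : Type*} [Fintype V] [DecidableEq V] (G : SimpleGraph V)
    [Fintype G.edgeSet] (k : ℕ)
    (A : Finset V) (B : Finset G.edgeSet)
    (hAB : ∀ e ∈ B, ∀ v ∈ (e : Sym2 V), v ∈ A)
    (hsize : A.card + B.card ≤ Nat.choose k 2 + k)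
    (hweight : 2 * Nat.choose k 2 + k ≤ 2 * B.card + A.card) :
    A.card = k ∧ B.card = Nat.choose k 2 ∧ G.IsNClique k A := by
  classical
  set T : Finset (Sym2 V) := A.sym2.filter (fun e => ¬ e.IsDiag) with hT
  -- card of T
  have hdiag : (A.sym2.filter (fun e : Sym2 V => e.IsDiag)) = A.image Sym2.diag := by
    ext e
    induction e using Sym2.ind with
    | _ x y =>
      simp only [Finset.mem_filter, Finset.mk_mem_sym2_iff, Sym2.mk_isDiag_iff,
        Finset.mem_image]
      constructor
      · rintro ⟨⟨hx, _⟩, rfl⟩; exact ⟨x, hx, rfl⟩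
      · rintro ⟨a, ha, h⟩
        rw [Sym2.diag, Sym2.eq_iff] at h
        rcases h with ⟨rfl, rfl⟩ | ⟨rfl, rfl⟩ <;> exact ⟨⟨ha, ha⟩, rfl⟩
  have hdiagcard : (A.sym2.filter (fun e : Sym2 V => e.IsDiag)).card = A.card := by
    rw [hdiag]
    exact Finset.card_image_of_injective _ Sym2.diag_injective
  have hTcard : T.card = Nat.choose A.card 2 := by
    have h1 : T.card + A.card = A.sym2.card := by
      rw [← hdiagcard, hT, add_comm]
      exact Finset.card_filter_add_card_filter_not _
    have h2 := Finset.card_sym2 A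
    have h3 : Nat.choose (A.card + 1) 2 = A.card + Nat.choose A.card 2 := by
      rw [Nat.choose_succ_succ]
      simp [Nat.choose_one_right]
    omega
  -- B injects into T
  have hBsub : B.image (fun e => e.val) ⊆ T := by
    intro x hx
    obtain ⟨e, he, rfl⟩ := Finset.mem_image.mp hx
    refine Finset.mem_filter.mpr ⟨Finset.mem_sym2_iff.mpr (hAB e he), ?_⟩
    exact G.not_isDiag_of_mem_edgeSet e.2
  have hBcard : (B.image (fun e => e.val)).card = B.card :=
    Finset.card_image_of_injective _ Subtype.val_injective
  have hble : B.card ≤ Nat.choose A.card 2 := by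
    rw [← hBcard, ← hTcard]; exact Finset.card_le_card hBsub
  -- arithmetic
  have hak : A.card = k := by
    have hmono : Nat.choose A.card 2 ≤ Nat.choose k 2 ∨ k ≤ A.card := by
      by_cases h : A.card ≤ k
      · exact Or.inl (Nat.choose_le_choose 2 h)
      · exact Or.inr (by omega)
    have h4 : A.card ≤ k := by omega
    have h5 : Nat.choose A.card 2 ≤ Nat.choose k 2 := Nat.choose_le_choose 2 h4
    omega
  have hbk : B.card = Nat.choose k 2 := by
    have := hak ▸ hble
    omega
  refine ⟨hak, hbk, ?_, hak⟩
  -- clique: image of B equals T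
  have hTeq : B.image (fun e => e.val) = T :=
    Finset.eq_of_subset_of_card_le hBsub (by rw [hBcard, hTcard, hak, hbk])
  intro u hu v hv huv
  have : s(u, v) ∈ T := Finset.mem_filter.mpr ⟨Finset.mk_mem_sym2_iff.mpr ⟨hu, hv⟩, by
    simp [Sym2.mk_isDiag_iff, huv]⟩
  rw [← hTeq] at this
  obtain ⟨e, _, he⟩ := Finset.mem_image.mp this
  have : s(u, v) ∈ G.edgeSet := he ▸ e.2
  exact G.mem_edgeSet.mp this
end

section
/- Let t ≥ 1, ℓ = ⌈log₂ t⌉, k ≥ 2, and consider the cross-composition food web F' built from graphs G_0,…,G_{t−1} on common vertex set V: vertices are V ∪ E ∪ B', where E = E_0 ⊎ ⋯ ⊎ E_{t−1}, B = {0_0,1_0,…,0_{ℓ−1},1_{ℓ−1}}, each b ∈ B has a private set B_b of k²−1 in-neighbors (sources), B' = B ∪ ⋃_b B_b, and each edge-vertex e = {u,v} ∈ E_i has in-neighbors u, v, and the ℓ bit-vertices encoding i in binary. If S is 1-viable in F', intersects E, and |S| < k²·(ℓ+1), then |S ∩ B| = ℓ, there is a unique index b with S ∩ E ⊆ E_b,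 and S ∩ B is exactly the set of bit-vertices encoding b. -/
/-- Vertex type of the cross-composition food web: original vertices `V`,
edge-vertices (an edge of one of the `t` input graphs), bit-vertices
`0_j, 1_j` for `j < ℓ`, and for each bit-vertex a private set of `k² − 1`
prey. -/
abbrev CCVert (V : Type*) (t ℓ k : ℕ) (Eset : Fin t → Finset (Sym2 V)) : Type _ :=
  V ⊕ ((Σ i : Fin t, {e : Sym2 V // e ∈ Eset i}) ⊕
    ((Fin ℓ × Bool) ⊕ ((Fin ℓ × Bool) × Fin (k ^ 2 - 1))))

/-- Edges of the cross-composition food web: a vertex `v ∈ V` points to every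
edge-vertex `e` with `v ∈ e`; the bit-vertex `(j,b)` points to each
edge-vertex of the `i`-th graph whose `j`-th binary digit is `b`; each private
prey of a bit-vertex points to its bit-vertex. -/
def CCEdge {V : Type*} {t ℓ k : ℕ} (Eset : Fin t → Finset (Sym2 V)) :
    CCVert V t ℓ k Eset → CCVert V t ℓ k Eset → Prop
  | Sum.inl v, Sum.inr (Sum.inl ⟨_, e⟩) => v ∈ (e : Sym2 V)
  | Sum.inr (Sum.inr (Sum.inl (j, b))), Sum.inr (Sum.inl ⟨i, _⟩) =>
      Nat.testBit i.val j.val = b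
  | Sum.inr (Sum.inr (Sum.inr (jb, _))), Sum.inr (Sum.inr (Sum.inl jb')) => jb = jb'
  | _, _ => False

/-- Indicator for bit-vertices. -/
def isBitVert {V : Type*} {t ℓ k : ℕ} {Eset : Fin t → Finset (Sym2 V)} :
    CCVert V t ℓ k Eset → Bool
  | Sum.inr (Sum.inr (Sum.inl _)) => true
  | _ => false

/-- In the cross-composition food web built from `t` graphs `G_0,…,G_{t−1}`
with `ℓ = ⌈log₂ t⌉` and `k ≥ 2`: if `S` is 1-viable, intersects the
edge-vertices, and `|S| < k²·(ℓ+1)`, then `S` contains exactly `ℓ`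
bit-vertices, all edge-vertices in `S` come from a single index `b`, and the
bit-vertices in `S` are exactly the binary encoding of `b`. -/
theorem stmt15 {V : Type*} [Fintype V] [DecidableEq V]
    (t k : ℕ) (ht : 1 ≤ t) (hk : 2 ≤ k)
    (Eset : Fin t → Finset (Sym2 V))
    (ℓ : ℕ) (hℓ : ℓ = Nat.clog 2 t)
    (S : Finset (CCVert V t ℓ k Eset))
    (hviab : ∀ x ∈ S, ∀ y, CCEdge Eset y x → y ∈ S)
    (hE : ∃ (i : Fin t) (e : {e : Sym2 V // e ∈ Eset i}),
      Sum.inr (Sum.inl ⟨i, e⟩) ∈ S)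
    (hcard : S.card < k ^ 2 * (ℓ + 1)) :
    (S.filter (fun w => isBitVert w = true)).card = ℓ ∧
    ∃ b : Fin t,
      (∀ (i : Fin t) (e : {e : Sym2 V // e ∈ Eset i}),
        Sum.inr (Sum.inl ⟨i, e⟩) ∈ S → i = b) ∧
      (∀ (j : Fin ℓ) (c : Bool),
        Sum.inr (Sum.inr (Sum.inl (j, c))) ∈ S ↔ Nat.testBit b.val j.val = c) := by
  classical
  obtain ⟨i, e, hie⟩ := hE
  have hk2 : 0 < k ^ 2 := by positivity
  -- bit vertices of i forced into S
  have hbits : ∀ j : Fin ℓ,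
      (Sum.inr (Sum.inr (Sum.inl (j, Nat.testBit i.val j.val))) : CCVert V t ℓ k Eset) ∈ S := by
    intro j
    exact hviab _ hie _ rfl
  -- the set of bit pairs whose bit-vertex lies in S
  set S' : Finset (Fin ℓ × Bool) := Finset.univ.filter
    (fun jb => (Sum.inr (Sum.inr (Sum.inl jb)) : CCVert V t ℓ k Eset) ∈ S) with hS'def
  have hmemS' : ∀ jb : Fin ℓ × Bool,
      jb ∈ S' ↔ (Sum.inr (Sum.inr (Sum.inl jb)) : CCVert V t ℓ k Eset) ∈ S := by
    intro jb; simp [hS'def]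
  -- prey forced into S
  have hprey : ∀ jb ∈ S', ∀ r : Fin (k ^ 2 - 1),
      (Sum.inr (Sum.inr (Sum.inr (jb, r))) : CCVert V t ℓ k Eset) ∈ S := by
    intro jb hjb r
    exact hviab _ ((hmemS' jb).1 hjb) _ rfl
  -- counting
  let blob : Fin ℓ × Bool → Finset (CCVert V t ℓ k Eset) := fun jb =>
    insert (Sum.inr (Sum.inr (Sum.inl jb)))
      ((Finset.univ : Finset (Fin (k ^ 2 - 1))).image
        (fun r => (Sum.inr (Sum.inr (Sum.inr (jb, r))) : CCVert V t ℓ k Eset)))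
  have hblobcard : ∀ jb : Fin ℓ × Bool, (blob jb).card = k ^ 2 := by
    intro jb
    have h1 : (Sum.inr (Sum.inr (Sum.inl jb)) : CCVert V t ℓ k Eset) ∉
        ((Finset.univ : Finset (Fin (k ^ 2 - 1))).image
          (fun r => (Sum.inr (Sum.inr (Sum.inr (jb, r))) : CCVert V t ℓ k Eset))) := by
      simp
    rw [Finset.card_insert_of_notMem h1, Finset.card_image_of_injective _
      (by intro a b hab; simpa using hab), Finset.card_univ, Fintype.card_fin]
    omega
  have hdisj : (S' : Set (Fin ℓ × Bool)).PairwiseDisjoint blob := by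
    intro a _ b _ hab
    simp only [Function.onFun]
    rw [Finset.disjoint_left]
    intro x hx1 hx2
    simp only [blob, Finset.mem_insert, Finset.mem_image, Finset.mem_univ, true_and] at hx1 hx2
    apply hab
    rcases hx1 with h1 | ⟨r1, h1⟩ <;> rcases hx2 with h2 | ⟨r2, h2⟩ <;> subst h1
    · exact by simpa using h2
    · exact absurd h2 (by simp)
    · exact absurd h2 (by simp)
    · exact (by simpa using h2 : b = a ∧ r2 = r1).1.symm
  have hsub : S'.biUnion blob ⊆ S := by
    intro x hx
    simp only [Finset.mem_biUnion] at hx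
    obtain ⟨jb, hjb, hx⟩ := hx
    simp only [blob, Finset.mem_insert, Finset.mem_image, Finset.mem_univ, true_and] at hx
    rcases hx with h | ⟨r, h⟩
    · subst h; exact (hmemS' jb).1 hjb
    · subst h; exact hprey jb hjb r
  have hcount : S'.card * k ^ 2 ≤ S.card := by
    have := Finset.card_le_card hsub
    rwa [Finset.card_biUnion hdisj, Finset.sum_congr rfl (fun jb _ => hblobcard jb),
      Finset.sum_const, smul_eq_mul] at this
  have hS'le : S'.card ≤ ℓ := by nlinarith
  -- the binary encoding of i
  set P : Finset (Fin ℓ × Bool) := Finset.univ.image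
    (fun j : Fin ℓ => (j, Nat.testBit i.val j.val)) with hPdef
  have hPcard : P.card = ℓ := by
    rw [hPdef, Finset.card_image_of_injective _ (fun a b hab => (Prod.ext_iff.mp hab).1),
      Finset.card_univ, Fintype.card_fin]
  have hPsub : P ⊆ S' := by
    intro jb hjb
    simp only [hPdef, Finset.mem_image, Finset.mem_univ, true_and] at hjb
    obtain ⟨j, rfl⟩ := hjb
    exact (hmemS' _).2 (hbits j)
  have hS'eq : S' = P := (Finset.eq_of_subset_of_card_le hPsub (by rw [hPcard]; exact hS'le)).symm
  have hmemP : ∀ (j : Fin ℓ) (c : Bool),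
      (Sum.inr (Sum.inr (Sum.inl (j, c))) : CCVert V t ℓ k Eset) ∈ S ↔
        Nat.testBit i.val j.val = c := by
    intro j c
    rw [← hmemS' (j, c), hS'eq, hPdef]
    constructor
    · intro h
      simp only [Finset.mem_image, Finset.mem_univ, true_and] at h
      obtain ⟨j', hj'⟩ := h
      obtain ⟨rfl, rfl⟩ := Prod.mk.injEq .. ▸ hj'
      rfl
    · intro h
      simp only [Finset.mem_image, Finset.mem_univ, true_and]
      exact ⟨j, by rw [h]⟩
  -- filter card
  have hfilter : S.filter (fun w => isBitVert w = true) =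
      S'.image (fun jb => (Sum.inr (Sum.inr (Sum.inl jb)) : CCVert V t ℓ k Eset)) := by
    ext w
    simp only [Finset.mem_filter, Finset.mem_image]
    constructor
    · rintro ⟨hw, hbit⟩
      match w with
      | Sum.inr (Sum.inr (Sum.inl jb)) => exact ⟨jb, (hmemS' jb).2 hw, rfl⟩
      | Sum.inl _ => simp [isBitVert] at hbit
      | Sum.inr (Sum.inl _) => simp [isBitVert] at hbit
      | Sum.inr (Sum.inr (Sum.inr _)) => simp [isBitVert] at hbit
    · rintro ⟨jb, hjb, rfl⟩
      exact ⟨(hmemS' jb).1 hjb, rfl⟩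
  have hfcard : (S.filter (fun w => isBitVert w = true)).card = ℓ := by
    rw [hfilter, Finset.card_image_of_injective _ (by intro a b hab; simpa using hab),
      hS'eq, hPcard]
  refine ⟨hfcard, i, ?_, fun j c => hmemP j c⟩
  intro i' e' hi'
  have hlt : ∀ n : Fin t, n.val < 2 ^ ℓ := by
    intro n
    calc n.val < t := n.isLt
    _ ≤ 2 ^ ℓ := hℓ ▸ Nat.le_pow_clog one_lt_two t
  apply Fin.ext
  apply Nat.eq_of_testBit_eq
  intro j
  by_cases hj : j < ℓ
  · have hb := hviab _ hi' (Sum.inr (Sum.inr (Sum.inl (⟨j, hj⟩, Nat.testBit i'.val j)))) rfl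
    exact (hmemP ⟨j, hj⟩ _).1 hb |>.symm ▸ ((hmemP ⟨j, hj⟩ _).1 hb).symm
  · rw [Nat.testBit_eq_false_of_lt (lt_of_lt_of_le (hlt i') (Nat.pow_le_pow_right (by norm_num) (le_of_not_gt hj))),
      Nat.testBit_eq_false_of_lt (lt_of_lt_of_le (hlt i) (Nat.pow_le_pow_right (by norm_num) (le_of_not_gt hj)))]
end

section
/- Let F be a directed acyclic graph on X, Z ⊆ X with F − Z an acyclic tournament with topological ordering τ, and k ∈ ℕ. Let z ∈ X ∖ Z with τ(z) = k + 1 (if it exists), and let X_{≥z} be the set of vertices reachable from z in F. Then every 1-viable set S in F with |S| ≤ k satisfies S ∩ X_{≥z} = ∅, and S is 1-viable in F − X_{≥z}. Conversely every 1-viable set in F − X_{≥z} is 1-viable in F. -/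
/-- Reduction Rule 1 of the distance-to-clique kernel.  Let `F` be a finite
DAG on `X`, `Z ⊆ X` with `F − Z` an acyclic tournament with (unique)
topological ordering `τ` (so `F a b ↔ τ a < τ b` on `X ∖ Z`), and let
`z ∈ X ∖ Z` be the `(k+1)`-st vertex of the ordering (0-indexed: `τ z = k`).
Let `W = X_{≥z}` be the set of vertices reachable from `z`.  Then every
1-viable set `S` with `|S| ≤ k` avoids `W` and is 1-viable in `F − W`;
conversely, every 1-viable set in `F − W` is 1-viable in `F`. -/
theorem stmt17 {X : Type*} [Fintype X] [DecidableEq X] (F : X → X → Prop)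
    (hacyc : ∀ x, ¬ Relation.TransGen F x x)
    (Z : Finset X)
    (τ : {x // x ∈ Zᶜ} ≃ Fin Zᶜ.card)
    (htau : ∀ a b : {x // x ∈ Zᶜ}, F a.val b.val ↔ τ a < τ b)
    (k : ℕ) (z : X) (hz : z ∈ Zᶜ) (hzk : (τ ⟨z, hz⟩ : ℕ) = k)
    (W : Set X) (hW : W = {x | Relation.ReflTransGen F z x}) :
    (∀ S : Set X, (∀ x ∈ S, ∀ y, F y x → y ∈ S) → S.ncard ≤ k →
      S ∩ W = ∅ ∧ (∀ x ∈ S, ∀ y ∉ W, F y x → y ∈ S)) ∧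
    (∀ S' : Set X, S' ⊆ Wᶜ → (∀ x ∈ S', ∀ y ∉ W, F y x → y ∈ S') →
      ∀ x ∈ S', ∀ y, F y x → y ∈ S') := by
  have closure : ∀ S : Set X, (∀ x ∈ S, ∀ y, F y x → y ∈ S) →
      ∀ x ∈ S, ∀ y, Relation.ReflTransGen F y x → y ∈ S := by
    intro S hS x hx y hyx
    induction hyx using Relation.ReflTransGen.head_induction_on with
    | refl => exact hx
    | head hab _ ih => exact hS _ ih _ hab
  constructor
  · intro S hS hcard
    refine ⟨?_, fun x hx y _ hyx => hS x hx y hyx⟩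
    by_contra hne
    obtain ⟨x, hxS, hxW⟩ := Set.nonempty_iff_ne_empty.mpr hne
    rw [hW] at hxW
    have hk : k < Zᶜ.card := hzk ▸ (τ ⟨z, hz⟩).isLt
    set f : Fin (k + 1) → X := fun i => (τ.symm ⟨i.val, lt_of_le_of_lt (Nat.lt_succ_iff.mp i.isLt) hk⟩).val with hf
    have hinj : Function.Injective f := by
      intro i j hij
      have := τ.symm.injective (Subtype.val_injective hij)
      exact Fin.ext (congrArg Fin.val this : (⟨i.val,_⟩:Fin Zᶜ.card).val = (⟨j.val,_⟩:Fin Zᶜ.card).val)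
    have hsub : Set.range f ⊆ S := by
      rintro _ ⟨i, rfl⟩
      set a := τ.symm ⟨i.val, lt_of_le_of_lt (Nat.lt_succ_iff.mp i.isLt) hk⟩
      have hτa : (τ a : ℕ) = i.val := by simp [a]
      have hreach : Relation.ReflTransGen F a.val x := by
        rcases lt_or_eq_of_le (Nat.lt_succ_iff.mp i.isLt) with hlt | heq
        · have hFa : F a.val z := by
            rw [htau a ⟨z, hz⟩]
            rw [Fin.lt_def, hτa, hzk]; exact hlt
          exact Relation.ReflTransGen.head hFa hxW
        · have : a = ⟨z, hz⟩ := τ.injective (by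
            apply Fin.ext; rw [hτa, hzk, heq])
          rw [this]; exact hxW
      exact closure S hS x hxS a.val hreach
    have h1 : (Set.range f).ncard = k + 1 := by
      rw [← Nat.card_coe_set_eq, Nat.card_range_of_injective hinj, Nat.card_eq_fintype_card, Fintype.card_fin]
    have := Set.ncard_le_ncard hsub S.toFinite
    omega
  · intro S' hS' hcl x hx y hyx
    by_cases hyW : y ∈ W
    · exfalso
      apply hS' hx
      rw [hW] at hyW ⊢
      exact hyW.tail hyx
    · exact hcl x hx y hyW hyx
end

section
/- Let F be a directed acyclic graph on X and Z ⊆ X such that F[X ∖ Z] is an acyclic tournament with topological ordering τ. Fix k with |Z| ≤ k ≤ |X ∖ Z|. Then every 1-viable set S in F with |S| = k contains all vertices y ∈ X ∖ Z with τ(y) ≤ k − |Z|. -/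
/-- Let `F` be a finite DAG on `X` and `Z ⊆ X` such that `F[X ∖ Z]` is an
acyclic tournament with topological ordering `τ` (so `F a b ↔ τ a < τ b` on
`X ∖ Z`).  Fix `k` with `|Z| ≤ k ≤ |X ∖ Z|`.  Then every 1-viable set `S`
with `|S| = k` contains all vertices `y ∈ X ∖ Z` whose (1-indexed) position
is at most `k − |Z|`, i.e. with 0-indexed `τ y < k − |Z|`. -/
theorem stmt19 {X : Type*} [Fintype X] [DecidableEq X] (F : X → X → Prop)
    (hacyc : ∀ x, ¬ Relation.TransGen F x x)
    (Z : Finset X)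
    (τ : {x // x ∈ Zᶜ} ≃ Fin Zᶜ.card)
    (htau : ∀ a b : {x // x ∈ Zᶜ}, F a.val b.val ↔ τ a < τ b)
    (k : ℕ) (hk1 : Z.card ≤ k) (hk2 : k ≤ Zᶜ.card)
    (S : Finset X)
    (hviab : ∀ x ∈ S, ∀ y, F y x → y ∈ S)
    (hcard : S.card = k) :
    ∀ (y : X) (hy : y ∈ Zᶜ), (τ ⟨y, hy⟩ : ℕ) < k - Z.card → y ∈ S := by
  intro y hy hlt
  by_contra hyS
  -- T := vertices of S outside Z
  set T : Finset X := S ∩ Zᶜ with hT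
  -- every element of T has τ-index strictly below τ y
  have hsmall : ∀ x (hx : x ∈ T), (τ ⟨x, (Finset.mem_inter.mp hx).2⟩ : ℕ) < (τ ⟨y, hy⟩ : ℕ) := by
    intro x hx
    obtain ⟨hxS, hxZ⟩ := Finset.mem_inter.mp hx
    rcases lt_trichotomy (τ ⟨x, hxZ⟩) (τ ⟨y, hy⟩) with h | h | h
    · exact h
    · exfalso; apply hyS
      have hxy : x = y := congrArg Subtype.val (τ.injective h)
      exact hxy ▸ hxS
    · exfalso; apply hyS
      have : F y x := (htau ⟨y, hy⟩ ⟨x, hxZ⟩).mpr h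
      exact hviab x hxS y this
  -- hence |T| ≤ τ y
  have hTcard : T.card ≤ (τ ⟨y, hy⟩ : ℕ) := by
    have : T.card ≤ (Finset.range (τ ⟨y, hy⟩ : ℕ)).card := by
      apply Finset.card_le_card_of_injOn
        (fun x => if hx : x ∈ Zᶜ then (τ ⟨x, hx⟩ : ℕ) else 0)
      · intro x hx
        have hxZ := (Finset.mem_inter.mp hx).2
        simp only [hxZ, dif_pos, Finset.mem_coe, Finset.mem_range]
        exact hsmall x hx
      · intro a ha b hb hab
        have haZ := (Finset.mem_inter.mp ha).2
        have hbZ := (Finset.mem_inter.mp hb).2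
        simp only [haZ, hbZ, dif_pos] at hab
        have := τ.injective (Fin.ext hab)
        simpa [Subtype.ext_iff] using this
    simpa using this
  -- but |T| ≥ k - |Z|
  have hlow : k - Z.card ≤ T.card := by
    have hsplit : S.card ≤ T.card + Z.card := by
      have h1 : S ⊆ T ∪ Z := by
        intro x hxS
        by_cases hxZ : x ∈ Z
        · exact Finset.mem_union_right _ hxZ
        · exact Finset.mem_union_left _ (Finset.mem_inter.mpr ⟨hxS, Finset.mem_compl.mpr hxZ⟩)
      calc S.card ≤ (T ∪ Z).card := Finset.card_le_card h1
        _ ≤ T.card + Z.card := Finset.card_union_le _ _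
    omega
  omega
end
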